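/- (First-order optimality condition for θ-Fraxis, Eq. (11).) Let M, ρ be Hermitian 2×2 complex matrices, let θ ∈ ℝ, and let f : ℝ³ → ℝ be defined by f(n) = Re tr(M U_n ρ U_n†) with U_n = cos(θ/2)•1 − i·sin(θ/2)•(n·σ). If the unit vector n* ∈ ℝ³ is a local minimum of f restricted to the unit sphere {n : ‖n‖ = 1}, then there exists λ ∈ ℝ such that for each k ∈ {1,2,3}: sin²(θ/2)·Σ_j R_{kj} n*_j − 2λ·n*_k = −Re( i·sin(θ/2)cos(θ/2)·tr(M(ρσ_k − σ_kρ)) ), where R_{kj} = Re(tr(M σ_k ρ σ_j) + tr(M σ_j ρ σ_k)). -/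

import Mathlib

/-!
With `c = cos(θ/2)`, `s = sin(θ/2)` and `N = n·σ`, the Pauli matrices are Hermitian, so
`U_n† = c + i s N` and `M U_n ρ U_n† = c² Mρ + i s c M(ρN - Nρ) + s² MNρN`.
Hence `f(n) = const + ∑ b_k n_k + ∑ a_kj n_k n_j` is a quadratic polynomial with
`a_kj + a_jk = s² R_kj`, and the claimed identity is the Lagrange condition `∇f(n*) = 2λ n*`
for the constraint `|n|² = 1`, whose gradient `2n*` does not vanish on the sphere.
-/

open Matrix Complex

noncomputable def PX : Matrix (Fin 2) (Fin 2) ℂ := !![0, 1; 1, 0]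
noncomputable def PY : Matrix (Fin 2) (Fin 2) ℂ := !![0, -Complex.I; Complex.I, 0]
noncomputable def PZ : Matrix (Fin 2) (Fin 2) ℂ := !![1, 0; 0, -1]

/-- The Pauli matrices `σ₁ = X`, `σ₂ = Y`, `σ₃ = Z`. -/
noncomputable def pauli : Fin 3 → Matrix (Fin 2) (Fin 2) ℂ := ![PX, PY, PZ]

/-- `n·σ = n₁X + n₂Y + n₃Z`. -/
noncomputable def nsigma (n : Fin 3 → ℝ) : Matrix (Fin 2) (Fin 2) ℂ :=
  (n 0 : ℂ) • PX + (n 1 : ℂ) • PY + (n 2 : ℂ) • PZ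

/-- `R_n(θ) = cos(θ/2)•1 − i·sin(θ/2)•(n·σ)`. -/
noncomputable def Rgate (n : Fin 3 → ℝ) (θ : ℝ) : Matrix (Fin 2) (Fin 2) ℂ :=
  ((Real.cos (θ / 2) : ℂ)) • (1 : Matrix (Fin 2) (Fin 2) ℂ)
    - (Complex.I * (Real.sin (θ / 2) : ℂ)) • nsigma n

/-- The Fraxis coefficient matrix `R_{kj} = Re(tr(Mσ_kρσ_j) + tr(Mσ_jρσ_k))`. -/
noncomputable def fraxisMatrix (M ρ : Matrix (Fin 2) (Fin 2) ℂ) : Matrix (Fin 3) (Fin 3) ℝ :=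
  Matrix.of fun k j =>
    ((M * pauli k * ρ * pauli j).trace + (M * pauli j * ρ * pauli k).trace).re


theorem IsLocalExtrOn.exists_eq_smul_of_hasStrictFDerivAt {E : Type*} [NormedAddCommGroup E]
    [NormedSpace ℝ E] [CompleteSpace E] {f g : E → ℝ} {f' g' : StrongDual ℝ E} {x₀ : E}
    (hextr : IsLocalExtrOn f {x | g x = g x₀} x₀) (hg : HasStrictFDerivAt g g' x₀) (hg' : g' ≠ 0)
    (hf : HasStrictFDerivAt f f' x₀) : ∃ lam : ℝ, f' = lam • g' := by
  obtain ⟨a, b, hab, hcomb⟩ := hextr.exists_multipliers_of_hasStrictFDerivAt_1d hg hf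
  have hb : b ≠ 0 := by
    rintro rfl
    have ha : a ≠ 0 := fun ha => hab (by simp [ha])
    exact hg' (by simpa [ha] using hcomb)
  refine ⟨-a / b, ?_⟩
  ext v
  have hv := congrArg (fun L : StrongDual ℝ E => L v) hcomb
  simp only [_root_.add_apply, FunLike.coe_smul, Pi.smul_apply, smul_eq_mul,
    _root_.zero_apply] at hv ⊢
  field_simp
  linarith

section Coordinates

variable {ι : Type*} [Fintype ι]

open ContinuousLinearMap

theorem hasStrictFDerivAt_sum_sq (x : ι → ℝ) :
    HasStrictFDerivAt (fun n : ι → ℝ => ∑ k, n k ^ 2)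
      (∑ k, (2 * x k) • (proj k : (ι → ℝ) →L[ℝ] ℝ)) x := by
  refine HasStrictFDerivAt.fun_sum fun k _ => ?_
  refine ((hasStrictFDerivAt_apply (𝕜 := ℝ) k x).pow 2).congr_fderiv ?_
  ext v
  simp

theorem hasStrictFDerivAt_const_add_linear_add_quadratic (c : ℝ) (b : ι → ℝ)
    (a : ι → ι → ℝ) (x : ι → ℝ) :
    HasStrictFDerivAt (fun n : ι → ℝ => c + ∑ k, b k * n k + ∑ k, ∑ j, a k j * (n k * n j))
      (∑ k, (b k + ∑ j, (a k j + a j k) * x j) • (proj k : (ι → ℝ) →L[ℝ] ℝ)) x := by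
  have hproj (k : ι) := hasStrictFDerivAt_apply (𝕜 := ℝ) k x
  have hlin := HasStrictFDerivAt.fun_sum fun k (_ : k ∈ Finset.univ) =>
    (hproj k).const_mul (b k)
  have hquad := HasStrictFDerivAt.fun_sum fun k (_ : k ∈ Finset.univ) =>
    HasStrictFDerivAt.fun_sum fun j (_ : j ∈ Finset.univ) =>
      ((hproj k).fun_mul (hproj j)).const_mul (a k j)
  refine ((hlin.const_add c).fun_add hquad).congr_fderiv ?_
  ext v
  simp only [_root_.add_apply, _root_.sum_apply, _root_.smul_apply, smul_eq_mul, proj_apply,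
    add_mul, mul_add, Finset.sum_add_distrib, Finset.sum_mul]
  rw [add_comm (∑ k, ∑ j, a k j * (x k * v j))]
  congr 2
  · exact Finset.sum_congr rfl fun k _ => Finset.sum_congr rfl fun j _ => by ring
  · rw [Finset.sum_comm]
    exact Finset.sum_congr rfl fun k _ => Finset.sum_congr rfl fun j _ => by ring

theorem IsLocalExtrOn.exists_lagrange_multiplier_sphere {f : (ι → ℝ) → ℝ} {c x : ι → ℝ}
    (hx : ∑ k, x k ^ 2 = 1) (hextr : IsLocalExtrOn f {n | ∑ k, n k ^ 2 = 1} x)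
    (hf : HasStrictFDerivAt f (∑ k, c k • (proj k : (ι → ℝ) →L[ℝ] ℝ)) x) :
    ∃ lam : ℝ, ∀ k, c k = 2 * lam * x k := by
  classical
  have hg : (∑ k, (2 * x k) • (proj k : (ι → ℝ) →L[ℝ] ℝ)) ≠ 0 := by
    intro h
    have := congrArg (fun L : (ι → ℝ) →L[ℝ] ℝ => L x) h
    simp only [_root_.sum_apply, _root_.smul_apply, proj_apply, smul_eq_mul, _root_.zero_apply,
      mul_assoc, ← pow_two, ← Finset.mul_sum, hx] at this
    norm_num at this
  rw [← hx] at hextr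
  obtain ⟨lam, hlam⟩ :=
    hextr.exists_eq_smul_of_hasStrictFDerivAt (hasStrictFDerivAt_sum_sq x) hg hf
  refine ⟨lam, fun k => ?_⟩
  have hk := congrArg (fun L : (ι → ℝ) →L[ℝ] ℝ => L (Pi.single k 1)) hlam
  simp only [_root_.sum_apply, _root_.smul_apply, proj_apply, Pi.single_apply, smul_eq_mul,
    mul_ite, mul_one, mul_zero, Finset.sum_ite_eq', Finset.mem_univ, ↓reduceIte] at hk
  linarith

end Coordinates

lemma nsigma_eq_sum (n : Fin 3 → ℝ) : nsigma n = ∑ k, (n k : ℂ) • pauli k := by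
  simp [nsigma, pauli, Fin.sum_univ_three]

lemma conjTranspose_pauli (k : Fin 3) : (pauli k)ᴴ = pauli k := by
  fin_cases k <;> ext i j <;> fin_cases i <;> fin_cases j <;> simp [pauli, PX, PY, PZ]

lemma conjTranspose_nsigma (n : Fin 3 → ℝ) : (nsigma n)ᴴ = nsigma n := by
  simp [nsigma_eq_sum, conjTranspose_sum, conjTranspose_smul, conjTranspose_pauli]

lemma conjTranspose_Rgate (n : Fin 3 → ℝ) (θ : ℝ) :
    (Rgate n θ)ᴴ = (Real.cos (θ / 2) : ℂ) • 1 + (I * Real.sin (θ / 2)) • nsigma n := by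
  simp only [Rgate, conjTranspose_sub, conjTranspose_smul, conjTranspose_one, conjTranspose_nsigma,
    star_mul', Complex.star_def, conj_ofReal, conj_I, neg_mul, neg_smul, sub_neg_eq_add]

lemma mul_Rgate_mul_conjTranspose (M ρ : Matrix (Fin 2) (Fin 2) ℂ) (n : Fin 3 → ℝ) (θ : ℝ) :
    M * Rgate n θ * ρ * (Rgate n θ)ᴴ =
      (Real.cos (θ / 2) : ℂ) ^ 2 • (M * ρ)
        + (I * Real.sin (θ / 2) * Real.cos (θ / 2)) • (M * (ρ * nsigma n - nsigma n * ρ))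
        + (Real.sin (θ / 2) : ℂ) ^ 2 • (M * nsigma n * ρ * nsigma n) := by
  rw [conjTranspose_Rgate, Rgate]
  set N := nsigma n
  simp only [mul_add, mul_sub, sub_mul, mul_smul_comm, smul_mul_assoc, mul_one, Matrix.mul_assoc]
  linear_combination (norm := module) I_sq • (-(Real.sin (θ / 2) : ℂ) ^ 2 • (M * (N * (ρ * N))))

lemma re_trace_mul_Rgate_mul_conjTranspose (M ρ : Matrix (Fin 2) (Fin 2) ℂ) (n : Fin 3 → ℝ)
    (θ : ℝ) :
    (M * Rgate n θ * ρ * (Rgate n θ)ᴴ).trace.re =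
      Real.cos (θ / 2) ^ 2 * (M * ρ).trace.re
        + ∑ k, (I * Real.sin (θ / 2) * Real.cos (θ / 2)
            * (M * (ρ * pauli k - pauli k * ρ)).trace).re * n k
        + ∑ k, ∑ j, Real.sin (θ / 2) ^ 2 * (M * pauli k * ρ * pauli j).trace.re * (n k * n j) := by
  have hlin : M * (ρ * nsigma n - nsigma n * ρ)
      = ∑ k, (n k : ℂ) • (M * (ρ * pauli k - pauli k * ρ)) := by
    simp only [nsigma_eq_sum, Finset.mul_sum, Finset.sum_mul, ← Finset.sum_sub_distrib,
      mul_smul_comm, smul_mul_assoc, ← smul_sub]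
  have hquad : M * nsigma n * ρ * nsigma n
      = ∑ k, ∑ j, ((n k * n j : ℝ) : ℂ) • (M * pauli k * ρ * pauli j) := by
    simp only [nsigma_eq_sum, Finset.mul_sum, Finset.sum_mul, Finset.smul_sum, mul_smul_comm,
      smul_mul_assoc, smul_smul]
    rw [Finset.sum_comm]
    push_cast
    simp only [mul_comm]
  rw [mul_Rgate_mul_conjTranspose, hlin, hquad]
  simp only [trace_add, trace_smul, trace_sum, smul_eq_mul, add_re, ← ofReal_pow, Finset.mul_sum,
    re_sum, mul_left_comm _ ((n _ : ℝ) : ℂ), re_ofReal_mul]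
  congr 2
  · exact Finset.sum_congr rfl fun k _ => mul_comm _ _
  · exact funext fun k => Finset.sum_congr rfl fun j _ => by ring

theorem theta_fraxis_first_order_optimality_general (M ρ : Matrix (Fin 2) (Fin 2) ℂ)
    (θ : ℝ)
    (f : (Fin 3 → ℝ) → ℝ)
    (hf : f = fun n => ((M * Rgate n θ * ρ * (Rgate n θ)ᴴ).trace).re)
    (nstar : Fin 3 → ℝ) (hstar : nstar 0 ^ 2 + nstar 1 ^ 2 + nstar 2 ^ 2 = 1)
    (hmin : IsLocalMinOn f {n : Fin 3 → ℝ | n 0 ^ 2 + n 1 ^ 2 + n 2 ^ 2 = 1} nstar) :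
    ∃ lam : ℝ, ∀ k : Fin 3,
      Real.sin (θ / 2) ^ 2 * (∑ j : Fin 3, fraxisMatrix M ρ k j * nstar j)
          - 2 * lam * nstar k =
        -((Complex.I * (Real.sin (θ / 2) : ℂ) * (Real.cos (θ / 2) : ℂ)
            * (M * (ρ * pauli k - pauli k * ρ)).trace).re) := by
  have hsphere : {n : Fin 3 → ℝ | n 0 ^ 2 + n 1 ^ 2 + n 2 ^ 2 = 1}
      = {n | ∑ k, n k ^ 2 = 1} := by
    simp only [Fin.sum_univ_three]
  have hquad : f = fun n => Real.cos (θ / 2) ^ 2 * (M * ρ).trace.re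
      + ∑ k, (I * Real.sin (θ / 2) * Real.cos (θ / 2)
          * (M * (ρ * pauli k - pauli k * ρ)).trace).re * n k
      + ∑ k, ∑ j, Real.sin (θ / 2) ^ 2 * (M * pauli k * ρ * pauli j).trace.re * (n k * n j) :=
    hf ▸ funext (re_trace_mul_Rgate_mul_conjTranspose M ρ · θ)
  obtain ⟨lam, hlam⟩ := IsLocalExtrOn.exists_lagrange_multiplier_sphere
    (by simpa only [Fin.sum_univ_three] using hstar) (hsphere ▸ Or.inl hmin)
    (hquad ▸ hasStrictFDerivAt_const_add_linear_add_quadratic _ _ _ nstar)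
  refine ⟨lam, fun k => ?_⟩
  have hR : ∑ j, (Real.sin (θ / 2) ^ 2 * (M * pauli k * ρ * pauli j).trace.re
        + Real.sin (θ / 2) ^ 2 * (M * pauli j * ρ * pauli k).trace.re) * nstar j
      = Real.sin (θ / 2) ^ 2 * ∑ j, fraxisMatrix M ρ k j * nstar j := by
    simp only [fraxisMatrix, of_apply, add_re, Finset.mul_sum]
    exact Finset.sum_congr rfl fun j _ => by ring
  linarith [hlam k]

theorem theta_fraxis_first_order_optimality (M ρ : Matrix (Fin 2) (Fin 2) ℂ)
    (hM : Mᴴ = M) (hρ : ρᴴ = ρ) (θ : ℝ)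
    (f : (Fin 3 → ℝ) → ℝ)
    (hf : f = fun n => ((M * Rgate n θ * ρ * (Rgate n θ)ᴴ).trace).re)
    (nstar : Fin 3 → ℝ) (hstar : nstar 0 ^ 2 + nstar 1 ^ 2 + nstar 2 ^ 2 = 1)
    (hmin : IsLocalMinOn f {n : Fin 3 → ℝ | n 0 ^ 2 + n 1 ^ 2 + n 2 ^ 2 = 1} nstar) :
    ∃ lam : ℝ, ∀ k : Fin 3,
      Real.sin (θ / 2) ^ 2 * (∑ j : Fin 3, fraxisMatrix M ρ k j * nstar j)
          - 2 * lam * nstar k =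
        -((Complex.I * (Real.sin (θ / 2) : ℂ) * (Real.cos (θ / 2) : ℂ)
            * (M * (ρ * pauli k - pauli k * ρ)).trace).re) :=
  theta_fraxis_first_order_optimality_general M ρ θ f hf nstar hstar hmin
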